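/- Let m ≥ 3 and S = I_m ⊗ J_2. Inside the symplectic Lie algebra sp(S), the subalgebras Γ = {A ⊗ I_2 : A ∈ so(m,ℂ)} and Γ' = {I_m ⊗ B : B ∈ sp(2,ℂ)} are mutual centralizers: {X ∈ sp(S) : [X, A ⊗ I_2] = 0 for all A ∈ so(m,ℂ)} = Γ', and {X ∈ sp(S) : [X, I_m ⊗ B] = 0 for all B ∈ sp(2,ℂ)} = Γ. Hence (so(m,ℂ), sp(2,ℂ)) is a Howe dual pair in sp(2m,ℂ). -/
import Mathlib

open Matrix
open Kronecker

noncomputable section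

/-- J_2 = [[0,1],[−1,0]]. -/
def J2 : Matrix (Fin 2) (Fin 2) ℂ := !![0, 1; -1, 0]

/-- so(m,ℂ) = {A : Aᵀ + A = 0}. -/
def soSet (m : ℕ) : Set (Matrix (Fin m) (Fin m) ℂ) :=
  {A | Aᵀ + A = 0}

/-- sp(2,ℂ) = {B : Bᵀ J_2 + J_2 B = 0}. -/
def sp2Set : Set (Matrix (Fin 2) (Fin 2) ℂ) :=
  {B | Bᵀ * J2 + J2 * B = 0}

/-- S = I_m ⊗ J_2, a skew-symmetric nondegenerate bilinear form on ℂ^{2m}. -/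
def Smat (m : ℕ) : Matrix (Fin m × Fin 2) (Fin m × Fin 2) ℂ :=
  (1 : Matrix (Fin m) (Fin m) ℂ) ⊗ₖ J2

/-- sp(S) = {X : Xᵀ S + S X = 0}. -/
def spSSet (m : ℕ) : Set (Matrix (Fin m × Fin 2) (Fin m × Fin 2) ℂ) :=
  {X | Xᵀ * Smat m + Smat m * X = 0}

/-- φ(A,B) = A ⊗ I_2 + I_m ⊗ B. -/
def phiMap (m : ℕ) (A : Matrix (Fin m) (Fin m) ℂ) (B : Matrix (Fin 2) (Fin 2) ℂ) :
    Matrix (Fin m × Fin 2) (Fin m × Fin 2) ℂ :=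
  A ⊗ₖ (1 : Matrix (Fin 2) (Fin 2) ℂ) + (1 : Matrix (Fin m) (Fin m) ℂ) ⊗ₖ B

/-! ### Auxiliary lemmas -/

lemma brA_aux (m : ℕ) (X : Matrix (Fin m × Fin 2) (Fin m × Fin 2) ℂ)
    (A : Matrix (Fin m) (Fin m) ℂ) (i k : Fin m) (a b : Fin 2) :
    (⁅X, A ⊗ₖ (1 : Matrix (Fin 2) (Fin 2) ℂ)⁆ : Matrix _ _ ℂ) (i,a) (k,b)
      = (∑ j, X (i,a) (j,b) * A j k) - ∑ j, A i j * X (j,a) (k,b) := by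
  simp [Ring.lie_def, Matrix.mul_apply, Fintype.sum_prod_type, kronecker_apply,
    Matrix.one_apply, mul_ite, ite_mul, Finset.mul_sum, Finset.sum_ite_eq, Finset.sum_ite_eq']

lemma brB_aux (m : ℕ) (X : Matrix (Fin m × Fin 2) (Fin m × Fin 2) ℂ)
    (B : Matrix (Fin 2) (Fin 2) ℂ) (i k : Fin m) (a b : Fin 2) :
    (⁅X, (1 : Matrix (Fin m) (Fin m) ℂ) ⊗ₖ B⁆ : Matrix _ _ ℂ) (i,a) (k,b)
      = (∑ c, X (i,a) (k,c) * B c b) - ∑ c, B a c * X (i,c) (k,b) := by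
  simp [Ring.lie_def, Matrix.mul_apply, Fintype.sum_prod_type, kronecker_apply,
    Matrix.one_apply, mul_ite, ite_mul, Finset.mul_sum, Finset.sum_ite_eq, Finset.sum_ite_eq']

lemma sum_skew_right (m : ℕ) (f : Fin m → ℂ) (p q k : Fin m) :
    ∑ j, f j * ((Matrix.single p q (1:ℂ) - Matrix.single q p 1 :
        Matrix (Fin m) (Fin m) ℂ)) j k
      = (if q = k then f p else 0) - (if p = k then f q else 0) := by
  simp [Matrix.single, ite_and, Matrix.sub_apply, mul_sub, Finset.sum_sub_distrib,
    mul_ite, Finset.sum_ite_eq, Finset.sum_ite_eq']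

lemma sum_skew_left (m : ℕ) (f : Fin m → ℂ) (p q i : Fin m) :
    ∑ j, ((Matrix.single p q (1:ℂ) - Matrix.single q p 1 :
        Matrix (Fin m) (Fin m) ℂ)) i j * f j
      = (if p = i then f q else 0) - (if q = i then f p else 0) := by
  simp [Matrix.single, ite_and, Matrix.sub_apply, sub_mul, Finset.sum_sub_distrib,
    ite_mul, Finset.sum_ite_eq, Finset.sum_ite_eq']

lemma stdskew_mem (m : ℕ) (p q : Fin m) :
    Matrix.single p q (1:ℂ) - Matrix.single q p 1 ∈ soSet m := by
  ext i j
  simp [soSet, Matrix.single, ite_and, Matrix.sub_apply, Matrix.add_apply,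
    Matrix.transpose_apply]
  split <;> split <;> simp_all [eq_comm] <;>
    (try (by_cases h1 : q = j <;> by_cases h2 : i = j <;> simp [h1, h2])) <;>
    (try (by_cases h1 : p = j <;> by_cases h2 : i = j <;> simp [h1, h2]))

lemma kron_comm_lemma (m : ℕ) (A : Matrix (Fin m) (Fin m) ℂ) (B : Matrix (Fin 2) (Fin 2) ℂ) :
    (⁅(1 : Matrix (Fin m) (Fin m) ℂ) ⊗ₖ B, A ⊗ₖ (1 : Matrix (Fin 2) (Fin 2) ℂ)⁆ :
      Matrix _ _ ℂ) = 0 := by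
  rw [Ring.lie_def, ← Matrix.mul_kronecker_mul, ← Matrix.mul_kronecker_mul]
  simp only [one_mul, mul_one, sub_self]

lemma oneKron_mem_sp (m : ℕ) (B : Matrix (Fin 2) (Fin 2) ℂ) (hB : B ∈ sp2Set) :
    (1 : Matrix (Fin m) (Fin m) ℂ) ⊗ₖ B ∈ spSSet m := by
  have h : ((1 : Matrix (Fin m) (Fin m) ℂ) ⊗ₖ B)ᵀ = (1 : Matrix (Fin m) (Fin m) ℂ) ⊗ₖ Bᵀ := by
    rw [← Matrix.kroneckerMap_transpose, Matrix.transpose_one]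
  show _ + _ = _
  rw [h, Smat, ← Matrix.mul_kronecker_mul, ← Matrix.mul_kronecker_mul]
  simp only [one_mul, mul_one]
  rw [← Matrix.kronecker_add, hB, Matrix.kronecker_zero]

lemma kronOne_mem_sp (m : ℕ) (A : Matrix (Fin m) (Fin m) ℂ) (hA : A ∈ soSet m) :
    A ⊗ₖ (1 : Matrix (Fin 2) (Fin 2) ℂ) ∈ spSSet m := by
  have h : (A ⊗ₖ (1 : Matrix (Fin 2) (Fin 2) ℂ))ᵀ = Aᵀ ⊗ₖ (1 : Matrix (Fin 2) (Fin 2) ℂ) := by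
    rw [← Matrix.kroneckerMap_transpose, Matrix.transpose_one]
  show _ + _ = _
  rw [h, Smat, ← Matrix.mul_kronecker_mul, ← Matrix.mul_kronecker_mul]
  simp only [one_mul, mul_one]
  rw [← Matrix.add_kronecker, hA, Matrix.zero_kronecker]

lemma H_mem : (!![1,0;0,-1] : Matrix (Fin 2) (Fin 2) ℂ) ∈ sp2Set := by
  show _ + _ = _
  ext i j
  fin_cases i <;> fin_cases j <;>
    norm_num [J2, Matrix.mul_apply, Fin.sum_univ_two, Matrix.add_apply, Matrix.transpose_apply,
      Matrix.cons_val_zero, Matrix.cons_val_one, Matrix.head_cons, Matrix.head_fin_const,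
      Matrix.vecHead, Matrix.vecTail]

lemma E_mem : (!![0,1;0,0] : Matrix (Fin 2) (Fin 2) ℂ) ∈ sp2Set := by
  show _ + _ = _
  ext i j
  fin_cases i <;> fin_cases j <;>
    norm_num [J2, Matrix.mul_apply, Fin.sum_univ_two, Matrix.add_apply, Matrix.transpose_apply,
      Matrix.cons_val_zero, Matrix.cons_val_one, Matrix.head_cons, Matrix.head_fin_const,
      Matrix.vecHead, Matrix.vecTail]

lemma third_elem {m : ℕ} (hm : 3 ≤ m) (i j : Fin m) : ∃ q : Fin m, q ≠ i ∧ q ≠ j := by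
  by_contra h
  push_neg at h
  have hsub : (Finset.univ : Finset (Fin m)) ⊆ {i, j} := by
    intro q _
    rcases eq_or_ne q i with h1 | h1
    · simp [h1]
    · simp [h q h1]
  have := Finset.card_le_card hsub
  simp only [Finset.card_univ, Fintype.card_fin] at this
  have h2 : ({i, j} : Finset (Fin m)).card ≤ 2 :=
    le_trans (Finset.card_insert_le _ _) (by simp)
  omega

/-! ### The main theorem -/

/-- inside sp(S), S = I_m ⊗ J_2 (m ≥ 3), the subalgebras
Γ = {A ⊗ I₂ : A ∈ so(m,ℂ)} and Γ' = {I_m ⊗ B : B ∈ sp(2,ℂ)} are mutual centralizers: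
(so(m,ℂ), sp(2,ℂ)) is a Howe dual pair in sp(2m,ℂ). -/
theorem statement_9 (m : ℕ) (hm : 3 ≤ m) :
    {X ∈ spSSet m | ∀ A ∈ soSet m,
        ⁅X, A ⊗ₖ (1 : Matrix (Fin 2) (Fin 2) ℂ)⁆ = 0}
      = {X | ∃ B ∈ sp2Set, X = (1 : Matrix (Fin m) (Fin m) ℂ) ⊗ₖ B} ∧
    {X ∈ spSSet m | ∀ B ∈ sp2Set,
        ⁅X, (1 : Matrix (Fin m) (Fin m) ℂ) ⊗ₖ B⁆ = 0}
      = {X | ∃ A ∈ soSet m, X = A ⊗ₖ (1 : Matrix (Fin 2) (Fin 2) ℂ)} := by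
  have hz : 0 < m := by omega
  set z : Fin m := ⟨0, hz⟩ with hzdef
  constructor
  · -- centralizer of so(m) ⊗ 1 is 1 ⊗ sp(2)
    ext X
    simp only [Set.mem_setOf_eq, Set.mem_sep_iff]
    constructor
    · rintro ⟨hXsp, hXc⟩
      -- the key entrywise commutation relation
      have key : ∀ (p q i k : Fin m) (a b : Fin 2),
          ((if q = k then X (i,a) (p,b) else 0) - (if p = k then X (i,a) (q,b) else 0))
          = ((if p = i then X (q,a) (k,b) else 0) - (if q = i then X (p,a) (k,b) else 0)) := by
        intro p q i k a b
        have h := hXc _ (stdskew_mem m p q)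
        have h2 := congrFun (congrFun h (i,a)) (k,b)
        rw [brA_aux] at h2
        rw [sum_skew_right m (fun j => X (i,a) (j,b)) p q k,
          sum_skew_left m (fun j => X (j,a) (k,b)) p q i] at h2
        simpa [sub_eq_zero] using h2
      -- off-diagonal blocks vanish
      have off : ∀ (i k : Fin m) (a b : Fin 2), i ≠ k → X (i,a) (k,b) = 0 := by
        intro i k a b hik
        obtain ⟨q, hqi, hqk⟩ := third_elem hm i k
        have h := key k q i q a b
        simp [hqk.symm, (Ne.symm hik), hqi.symm, fun h' : k = q => hqk h'.symm,
          fun h' : k = i => hik h'.symm, fun h' : q = i => hqi h'] at h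
        exact h
      -- diagonal blocks are all equal
      have diag : ∀ (p q : Fin m) (a b : Fin 2), X (p,a) (p,b) = X (q,a) (q,b) := by
        intro p q a b
        rcases eq_or_ne p q with rfl | hpq
        · rfl
        · have h := key p q p q a b
          simpa [hpq, hpq.symm] using h
      refine ⟨Matrix.of (fun a b => X (z,a) (z,b)), ?_, ?_⟩
      · -- B ∈ sp2Set
        have hXeq : X = (1 : Matrix (Fin m) (Fin m) ℂ) ⊗ₖ
            (Matrix.of (fun a b => X (z,a) (z,b))) := by
          ext ⟨i, a⟩ ⟨k, b⟩
          rw [kronecker_apply, Matrix.one_apply]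
          rcases eq_or_ne i k with rfl | hik
          · simp [diag i z a b]
          · simp [hik, off i k a b hik]
        have hsp := hXsp
        rw [spSSet, Set.mem_setOf_eq, hXeq] at hsp
        have htr : ((1 : Matrix (Fin m) (Fin m) ℂ) ⊗ₖ
            (Matrix.of (fun a b => X (z,a) (z,b))))ᵀ
            = (1 : Matrix (Fin m) (Fin m) ℂ) ⊗ₖ (Matrix.of (fun a b => X (z,a) (z,b)))ᵀ := by
          rw [← Matrix.kroneckerMap_transpose, Matrix.transpose_one]
        rw [htr, Smat, ← Matrix.mul_kronecker_mul, ← Matrix.mul_kronecker_mul] at hsp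
        simp only [one_mul, mul_one] at hsp
        rw [← Matrix.kronecker_add] at hsp
        show _ + _ = _
        ext a b
        have h := congrFun (congrFun hsp (z,a)) (z,b)
        rw [kronecker_apply, Matrix.one_apply_eq] at h
        simpa using h
      · -- X = 1 ⊗ B
        ext ⟨i, a⟩ ⟨k, b⟩
        rw [kronecker_apply, Matrix.one_apply]
        rcases eq_or_ne i k with rfl | hik
        · simp [diag i z a b]
        · simp [hik, off i k a b hik]
    · rintro ⟨B, hB, rfl⟩
      exact ⟨oneKron_mem_sp m B hB, fun A _ => kron_comm_lemma m A B⟩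
  · -- centralizer of 1 ⊗ sp(2) is so(m) ⊗ 1
    ext X
    simp only [Set.mem_setOf_eq, Set.mem_sep_iff]
    constructor
    · rintro ⟨hXsp, hXc⟩
      have keyB : ∀ B ∈ sp2Set, ∀ (i k : Fin m) (a b : Fin 2),
          (∑ c, X (i,a) (k,c) * B c b) = ∑ c, B a c * X (i,c) (k,b) := by
        intro B hB i k a b
        have h := hXc B hB
        have h2 := congrFun (congrFun h (i,a)) (k,b)
        rw [brB_aux] at h2
        simpa [sub_eq_zero] using h2
      -- from H: off-diagonal entries of blocks vanish
      have off01 : ∀ (i k : Fin m), X (i,0) (k,1) = 0 := by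
        intro i k
        have h := keyB _ H_mem i k 0 1
        simp [Fin.sum_univ_two] at h
        linear_combination (-1/2 : ℂ) * h
      have off10 : ∀ (i k : Fin m), X (i,1) (k,0) = 0 := by
        intro i k
        have h := keyB _ H_mem i k 1 0
        simp [Fin.sum_univ_two] at h
        linear_combination (1/2 : ℂ) * h
      -- from E: diagonal entries of blocks agree
      have diagB : ∀ (i k : Fin m), X (i,1) (k,1) = X (i,0) (k,0) := by
        intro i k
        have h := keyB _ E_mem i k 0 1
        simp [Fin.sum_univ_two] at h
        exact h.symm
      refine ⟨Matrix.of (fun i k => X (i,0) (k,0)), ?_, ?_⟩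
      · -- A ∈ soSet
        have hXeq : X = (Matrix.of (fun i k => X (i,0) (k,0))) ⊗ₖ
            (1 : Matrix (Fin 2) (Fin 2) ℂ) := by
          ext ⟨i, a⟩ ⟨k, b⟩
          rw [kronecker_apply, Matrix.one_apply]
          fin_cases a <;> fin_cases b <;>
            simp [off01 i k, off10 i k, diagB i k]
        have hsp := hXsp
        rw [spSSet, Set.mem_setOf_eq, hXeq] at hsp
        have htr : ((Matrix.of (fun i k => X (i,0) (k,0))) ⊗ₖ
            (1 : Matrix (Fin 2) (Fin 2) ℂ))ᵀ
            = (Matrix.of (fun i k => X (i,0) (k,0)))ᵀ ⊗ₖ (1 : Matrix (Fin 2) (Fin 2) ℂ) := by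
          rw [← Matrix.kroneckerMap_transpose, Matrix.transpose_one]
        rw [htr, Smat, ← Matrix.mul_kronecker_mul, ← Matrix.mul_kronecker_mul] at hsp
        simp only [one_mul, mul_one] at hsp
        rw [← Matrix.add_kronecker] at hsp
        show _ + _ = _
        ext i k
        have h := congrFun (congrFun hsp (i,(0 : Fin 2))) (k,(1 : Fin 2))
        rw [kronecker_apply] at h
        simp only [J2, Matrix.cons_val_zero, Matrix.cons_val_one, Matrix.head_cons,
          Matrix.cons_val', Matrix.of_apply, Matrix.empty_val'] at h
        simpa using h
      · -- X = A ⊗ 1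
        ext ⟨i, a⟩ ⟨k, b⟩
        rw [kronecker_apply, Matrix.one_apply]
        fin_cases a <;> fin_cases b <;>
          simp [off01 i k, off10 i k, diagB i k]
    · rintro ⟨A, hA, rfl⟩
      refine ⟨kronOne_mem_sp m A hA, fun B _ => ?_⟩
      have h := kron_comm_lemma m A B
      rw [Ring.lie_def] at h ⊢
      rw [sub_eq_zero] at h ⊢
      exact h.symm

end
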